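/- arXiv:math/0506600 — 3 statements merged into one kernel-verified Lean document; each statement's English description precedes it below -/
import Mathlib

section
/- (Soundness for I'') If A = B is provable in the equational calculus I'', then v(A) = v(B) in L₁. -/
/-! Since `v` commutes with `◁ₙ`, soundness reduces to the two associativity laws of insertion
in `L₁`, each proved by induction on the outer tree. Their side conditions are read off the
terms of `L''` because `|v A| = |A|`. -/

/-- Binary trees: the set `L₁` generated by `□` and `∧`. -/
inductive L1 : Type
  | box : L1
  | wedge : L1 → L1 → L1
  deriving DecidableEq

namespace L1

/-- `|X|`: the number of occurrences of `□` in `X`. -/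
def leaves : L1 → ℕ
  | box => 1
  | wedge X Y => X.leaves + Y.leaves

/-- Insertion `X ◁ₙ Z` in `L₁` (total extension of the partial operation;
on its domain `1 ≤ n ≤ |X|` it agrees with the defining clauses). -/
def ins : L1 → ℕ → L1 → L1
  | box, _, Z => Z
  | wedge X Y, n, Z =>
      if n ≤ X.leaves then wedge (X.ins n Z) Y else wedge X (Y.ins (n - X.leaves) Z)

end L1

/-- Raw terms over the generator `2` and the insertion operations `◁ₙ`. -/
inductive T2 : Type
  | two : T2
  | ins : T2 → ℕ → T2 → T2
  deriving DecidableEq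

namespace T2

/-- `|A|` for terms: `|2| = 2` and `|A ◁ₙ B| = |A| + |B| - 1`. -/
def size : T2 → ℕ
  | two => 2
  | ins A _ B => A.size + B.size - 1

/-- Membership in `L''`: each insertion `A ◁ₙ B` requires `1 ≤ n ≤ |A|`. -/
def WF : T2 → Prop
  | two => True
  | ins A n B => A.WF ∧ B.WF ∧ 1 ≤ n ∧ n ≤ A.size

/-- The interpretation `v : L'' → L₁`, with `v 2 = □∧□` and
`v (A ◁ₙ B) = v A ◁ₙ v B`. -/
def val : T2 → L1
  | two => L1.wedge L1.box L1.box
  | ins A n B => A.val.ins n B.val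

end T2

/-- The equational calculus `I''` on `L''`: the congruence (with respect to the
operations `◁ₙ`, on well-formed, i.e. defined, terms) generated by the axioms
(assoc 1) and (assoc 2). -/
inductive I2 : T2 → T2 → Prop
  | refl (A : T2) (h : A.WF) : I2 A A
  | symm {A B : T2} : I2 A B → I2 B A
  | trans {A B C : T2} : I2 A B → I2 B C → I2 A C
  | congr {A B C D : T2} {n : ℕ} : I2 A B → I2 C D →
      (T2.ins A n C).WF → (T2.ins B n D).WF →
      I2 (T2.ins A n C) (T2.ins B n D)
  | assoc1 {A B C : T2} {n m : ℕ} :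
      ((A.ins n B).ins m C).WF → n ≤ m → m < n + B.size →
      I2 ((A.ins n B).ins m C) (A.ins n (B.ins (m - n + 1) C))
  | assoc2 {A B C : T2} {n m : ℕ} :
      ((A.ins n B).ins m C).WF → n + B.size ≤ m →
      I2 ((A.ins n B).ins m C) ((A.ins (m - B.size + 1) C).ins n B)

namespace L1

theorem leaves_pos (X : L1) : 1 ≤ X.leaves := by
  induction X with
  | box => rfl
  | wedge X Y hX _ => simp only [leaves]; omega

/-- No bounds on `n` are needed: the total `ins` always replaces exactly one leaf. -/
theorem leaves_ins (X : L1) (n : ℕ) (Z : L1) :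
    (X.ins n Z).leaves = X.leaves + Z.leaves - 1 := by
  induction X generalizing n with
  | box => simp [ins, leaves]
  | wedge X Y hX hY =>
    have := leaves_pos X; have := leaves_pos Y; have := leaves_pos Z
    unfold ins; split_ifs <;> simp only [leaves, hX, hY] <;> omega

theorem ins_ins_assoc {X Y Z : L1} {n m : ℕ} (hn : 1 ≤ n) (hnX : n ≤ X.leaves)
    (hnm : n ≤ m) (hm : m < n + Y.leaves) :
    (X.ins n Y).ins m Z = X.ins n (Y.ins (m - n + 1) Z) := by
  induction X generalizing n m with
  | box =>
    obtain rfl : n = 1 := le_antisymm hnX hn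
    simp only [ins, Nat.sub_add_cancel hnm]
  | wedge X X' hX hX' =>
    simp only [leaves] at hnX
    by_cases hnl : n ≤ X.leaves
    · have hml : m ≤ (X.ins n Y).leaves := by rw [leaves_ins]; omega
      simp only [ins, if_pos hnl, if_pos hml, hX hn hnl hnm hm]
    · have hml : ¬ m ≤ X.leaves := by omega
      simp only [ins, if_neg hnl, if_neg hml,
        hX' (n := n - X.leaves) (m := m - X.leaves) (by omega) (by omega) (by omega) (by omega)]
      congr 3
      omega

theorem ins_ins_comm {X Y Z : L1} {n m : ℕ} (hn : 1 ≤ n) (hnm : n + Y.leaves ≤ m)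
    (hm : m < X.leaves + Y.leaves) :
    (X.ins n Y).ins m Z = (X.ins (m - Y.leaves + 1) Z).ins n Y := by
  induction X generalizing n m with
  | box => simp only [leaves] at hm; omega
  | wedge X X' hX hX' =>
    simp only [leaves] at hm
    have := leaves_pos X; have := leaves_pos Y; have := leaves_pos Z
    by_cases hnl : n ≤ X.leaves
    · by_cases hml : m < X.leaves + Y.leaves
      · have hkl : m - Y.leaves + 1 ≤ X.leaves := by omega
        have hm' : m ≤ (X.ins n Y).leaves := by rw [leaves_ins]; omega
        have hn' : n ≤ (X.ins (m - Y.leaves + 1) Z).leaves := by rw [leaves_ins]; omega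
        simp only [ins, if_pos hnl, if_pos hm', if_pos hkl, if_pos hn', hX hn hnm hml]
      · have hkl : ¬ m - Y.leaves + 1 ≤ X.leaves := by omega
        have hm' : ¬ m ≤ (X.ins n Y).leaves := by rw [leaves_ins]; omega
        simp only [ins, if_pos hnl, if_neg hm', if_neg hkl]
        congr 2
        rw [leaves_ins]
        omega
    · have hkl : ¬ m - Y.leaves + 1 ≤ X.leaves := by omega
      have hml : ¬ m ≤ X.leaves := by omega
      simp only [ins, if_neg hnl, if_neg hml, if_neg hkl,
        hX' (n := n - X.leaves) (m := m - X.leaves) (by omega) (by omega) (by omega)]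
      congr 3
      omega

end L1

theorem T2.leaves_val (A : T2) : A.val.leaves = A.size := by
  induction A with
  | two => rfl
  | ins A n B hA hB => simp only [val, size, L1.leaves_ins, hA, hB]

theorem soundness_I2 {A B : T2} (h : I2 A B) : A.val = B.val := by
  induction h with
  | refl => rfl
  | symm _ ih => exact ih.symm
  | trans _ _ ih₁ ih₂ => exact ih₁.trans ih₂
  | congr _ _ _ _ ih₁ ih₂ => simp only [T2.val, ih₁, ih₂]
  | @assoc1 A B C n m hWF hnm hm =>
    obtain ⟨⟨-, -, hn, hnA⟩, -⟩ := hWF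
    rw [← T2.leaves_val] at hnA hm
    exact L1.ins_ins_assoc hn hnA hnm hm
  | @assoc2 A B C n m hWF hnm =>
    obtain ⟨⟨-, -, hn, -⟩, -, -, hm⟩ := hWF
    have := B.val.leaves_pos
    simp only [T2.size, ← T2.leaves_val] at hnm hm
    simp only [T2.val, ← T2.leaves_val]
    exact L1.ins_ins_comm hn hnm (by omega)
end

section
/- (Measure decrease) Define c : L'' → ℕ by c(2) = 2 and c(B◁ₙC) = c(B)·(c(C)+1); let s(A) be the sum of the indices n of all occurrences of ◁ₙ in A, and let d(A) = c(A) + s(A). Then for every instance of (assoc 1), i.e. A = (P◁ₙQ)◁ₘR with n ≤ m < n+|Q| and B = P◁ₙ(Q◁_{m−n+1}R), and for every instance of (assoc 2), i.e. A = (P◁ₙQ)◁ₘR with n+|Q| ≤ m and B = (P◁_{m−|Q|+1}R)◁ₙQ, one has d(A) > d(B). -/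
namespace T2

/-- `c(2) = 2` and `c(B ◁ₙ C) = c(B)·(c(C)+1)`. -/
def c : T2 → ℕ
  | two => 2
  | ins A _ B => A.c * (B.c + 1)

/-- `s(A)`: the sum of the indices `n` of all occurrences of `◁ₙ` in `A`. -/
def s : T2 → ℕ
  | two => 0
  | ins A n B => A.s + n + B.s

/-- `d(A) = c(A) + s(A)`. -/
def d (A : T2) : ℕ := A.c + A.s

end T2

/-!
Under (assoc 1) the weight `c` loses exactly the summand `c(P)·c(R) ≥ 4`, while the index sum `s`
trades `m` for `m - n + 1`, i.e. grows by at most one. Under (assoc 2) `c` is unchanged, and `s`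
trades `m ≥ |Q|` for `m - |Q| + 1`, i.e. drops by `|Q| - 1 ≥ 1`.
-/

namespace T2

variable (P Q R : T2) (n m k : ℕ)

lemma two_le_c (A : T2) : 2 ≤ A.c := by
  induction A with
  | two => exact le_rfl
  | ins A _ B ihA _ => exact ihA.trans (Nat.le_mul_of_pos_right _ B.c.succ_pos)

lemma two_le_size (A : T2) : 2 ≤ A.size := by
  induction A with
  | two => exact le_rfl
  | ins A _ B ihA ihB => simp only [size]; omega

lemma c_assoc : ((P.ins n Q).ins m R).c = (P.ins n (Q.ins k R)).c + P.c * R.c := by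
  simp only [c]; ring

lemma c_ins_ins_comm : ((P.ins n Q).ins m R).c = ((P.ins k R).ins n Q).c := by
  simp only [c]; ring

lemma s_assoc : ((P.ins n Q).ins m R).s + k = (P.ins n (Q.ins k R)).s + m := by
  simp only [s]; ring

lemma s_ins_ins_comm : ((P.ins n Q).ins m R).s + k = ((P.ins k R).ins n Q).s + m := by
  simp only [s]; ring

lemma d_assoc_lt : (P.ins n (Q.ins (m - n + 1) R)).d < ((P.ins n Q).ins m R).d := by
  have hc := c_assoc P Q R n m (m - n + 1)
  have hs := s_assoc P Q R n m (m - n + 1)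
  have hPR : 4 ≤ P.c * R.c := Nat.mul_le_mul P.two_le_c R.two_le_c
  simp only [d]
  omega

lemma d_ins_ins_comm_lt (hm : Q.size ≤ m) :
    ((P.ins (m - Q.size + 1) R).ins n Q).d < ((P.ins n Q).ins m R).d := by
  have hc := c_ins_ins_comm P Q R n m (m - Q.size + 1)
  have hs := s_ins_ins_comm P Q R n m (m - Q.size + 1)
  have hQ := Q.two_le_size
  simp only [d]
  omega

end T2

theorem measure_decrease :
    (∀ (P Q R : T2) (n m : ℕ), ((P.ins n Q).ins m R).WF → n ≤ m → m < n + Q.size →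
        ((P.ins n Q).ins m R).d > (P.ins n (Q.ins (m - n + 1) R)).d) ∧
    (∀ (P Q R : T2) (n m : ℕ), ((P.ins n Q).ins m R).WF → n + Q.size ≤ m →
        ((P.ins n Q).ins m R).d > ((P.ins (m - Q.size + 1) R).ins n Q).d) := by
  exact ⟨fun P Q R n m _ _ _ => T2.d_assoc_lt P Q R n m,
    fun P Q R n m _ hm => T2.d_ins_ins_comm_lt P Q R n m (by omega)⟩
end

section
/- The map from the quotient of L' by provable equality in I' to L₁ induced by v, sending the equivalence class [A] to v(A), is well defined and is a bijection; its inverse i is determined by i(□) = [1] and i(X∧Y) = [(2◁₂B)◁₁A] whenever i(X) = [A] and i(Y) = [B]. -/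
/-- Raw terms over the generators `1`, `2` and the insertion operations `◁ₙ`. -/
inductive Tp : Type
  | one : Tp
  | two : Tp
  | ins : Tp → ℕ → Tp → Tp
  deriving DecidableEq

namespace Tp

/-- `|1| = 1`, `|2| = 2` and `|A ◁ₙ B| = |A| + |B| - 1`. -/
def size : Tp → ℕ
  | one => 1
  | two => 2
  | ins A _ B => A.size + B.size - 1

/-- Membership in `L'`: each insertion `A ◁ₙ B` requires `1 ≤ n ≤ |A|`. -/
def WF : Tp → Prop
  | one => True
  | two => True
  | ins A n B => A.WF ∧ B.WF ∧ 1 ≤ n ∧ n ≤ A.size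

/-- The interpretation `v : L' → L₁`: `v 1 = □`, `v 2 = □∧□`,
`v (A ◁ₙ B) = v A ◁ₙ v B`. -/
def val : Tp → L1
  | one => L1.box
  | two => L1.wedge L1.box L1.box
  | ins A n B => A.val.ins n B.val

end Tp

/-- The equational calculus `I'` on `L'`: the congruence generated by
(assoc 1), (assoc 2) and (unit). -/
inductive Ip : Tp → Tp → Prop
  | refl (A : Tp) (h : A.WF) : Ip A A
  | symm {A B : Tp} : Ip A B → Ip B A
  | trans {A B C : Tp} : Ip A B → Ip B C → Ip A C
  | congr {A B C D : Tp} {n : ℕ} : Ip A B → Ip C D →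
      (Tp.ins A n C).WF → (Tp.ins B n D).WF →
      Ip (Tp.ins A n C) (Tp.ins B n D)
  | assoc1 {A B C : Tp} {n m : ℕ} :
      ((A.ins n B).ins m C).WF → n ≤ m → m < n + B.size →
      Ip ((A.ins n B).ins m C) (A.ins n (B.ins (m - n + 1) C))
  | assoc2 {A B C : Tp} {n m : ℕ} :
      ((A.ins n B).ins m C).WF → n + B.size ≤ m →
      Ip ((A.ins n B).ins m C) ((A.ins (m - B.size + 1) C).ins n B)
  | unit1 {A : Tp} : A.WF → Ip (Tp.one.ins 1 A) A
  | unit2 {A : Tp} {n : ℕ} : A.WF → 1 ≤ n → n ≤ A.size → Ip (A.ins n Tp.one) A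

/-- Members of `L'`: well-formed terms. -/
def TpW : Type := {A : Tp // A.WF}

/-- Provable equality in `I'`, as a relation on members of `L'`. -/
def Irel (A B : TpW) : Prop := Ip A.1 B.1

theorem Tp.size_pos (A : Tp) : 1 ≤ A.size := by
  induction A with
  | one => exact le_refl 1
  | two => exact one_le_two
  | ins A n B ihA ihB => simp only [Tp.size]; omega

theorem wedge_wf (A B : TpW) : ((Tp.two.ins 2 B.1).ins 1 A.1).WF := by
  refine ⟨⟨trivial, B.2, one_le_two, le_refl 2⟩, A.2, le_refl 1, ?_⟩
  have := Tp.size_pos B.1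
  simp only [Tp.size]
  omega

/-! ### Auxiliary lemmas -/

theorem L1.leaves_pos_s12 (X : L1) : 1 ≤ X.leaves := by
  induction X with
  | box => exact le_refl 1
  | wedge X Y ihX ihY => simp only [L1.leaves]; omega

theorem L1.leaves_ins_s12 (X : L1) (n : ℕ) (Z : L1) (h : n ≤ X.leaves) :
    (X.ins n Z).leaves = X.leaves + Z.leaves - 1 := by
  induction X generalizing n with
  | box =>
    simp only [L1.ins, L1.leaves]; omega
  | wedge X Y ihX ihY =>
    simp only [L1.leaves] at h
    by_cases hn : n ≤ X.leaves
    · have := X.leaves_pos_s12; have := Z.leaves_pos_s12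
      simp only [L1.ins, if_pos hn, L1.leaves, ihX n hn]; omega
    · have := Y.leaves_pos_s12; have := Z.leaves_pos_s12; have := X.leaves_pos_s12
      simp only [L1.ins, if_neg hn, L1.leaves, ihY (n - X.leaves) (by omega)]; omega

theorem Tp.val_size (A : Tp) (h : A.WF) : A.val.leaves = A.size := by
  induction A with
  | one => rfl
  | two => rfl
  | ins A n B ihA ihB =>
    obtain ⟨hA, hB, h1, h2⟩ := h
    simp only [Tp.val, Tp.size]
    rw [L1.leaves_ins_s12 _ _ _ (by rw [ihA hA]; exact h2), ihA hA, ihB hB]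

theorem L1.ins_assoc1 (X Z W : L1) (n m : ℕ) (h1 : 1 ≤ n) (h2 : n ≤ X.leaves)
    (h3 : n ≤ m) (h4 : m < n + Z.leaves) :
    (X.ins n Z).ins m W = X.ins n (Z.ins (m - n + 1) W) := by
  induction X generalizing n m with
  | box =>
    simp only [L1.ins]
    simp only [L1.leaves] at h2
    have hn : n = 1 := by omega
    subst hn
    congr 1; omega
  | wedge X Y ihX ihY =>
    have := Z.leaves_pos_s12
    by_cases hn : n ≤ X.leaves
    · have hXZ : (X.ins n Z).leaves = X.leaves + Z.leaves - 1 :=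
        L1.leaves_ins_s12 X n Z hn
      have hm : m ≤ (X.ins n Z).leaves := by omega
      simp only [L1.ins, if_pos hn, if_pos hm, ihX n m h1 hn h3 h4]
    · simp only [L1.leaves] at h2
      have hm : ¬ m ≤ X.leaves := by omega
      have e1 : m - X.leaves - (n - X.leaves) + 1 = m - n + 1 := by omega
      simp only [L1.ins, if_neg hn, if_neg hm,
        ihY (n - X.leaves) (m - X.leaves) (by omega) (by omega) (by omega) (by omega), e1]

theorem L1.ins_assoc2 (X Z W : L1) (n m : ℕ) (h1 : 1 ≤ n) (h2 : n ≤ X.leaves)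
    (h3 : n + Z.leaves ≤ m) (h4 : m ≤ X.leaves + Z.leaves - 1) :
    (X.ins n Z).ins m W = (X.ins (m - Z.leaves + 1) W).ins n Z := by
  induction X generalizing n m with
  | box =>
    have := Z.leaves_pos_s12
    simp only [L1.leaves] at h4; omega
  | wedge X Y ihX ihY =>
    have hZ := Z.leaves_pos_s12
    have hW := W.leaves_pos_s12
    simp only [L1.leaves] at h2 h4
    by_cases hn : n ≤ X.leaves
    · have hXZ : (X.ins n Z).leaves = X.leaves + Z.leaves - 1 :=
        L1.leaves_ins_s12 X n Z hn
      by_cases hm : m ≤ X.leaves + Z.leaves - 1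
      · have hm' : m - Z.leaves + 1 ≤ X.leaves := by omega
        have hXW : (X.ins (m - Z.leaves + 1) W).leaves = X.leaves + W.leaves - 1 :=
          L1.leaves_ins_s12 X _ W hm'
        have hn' : n ≤ (X.ins (m - Z.leaves + 1) W).leaves := by omega
        simp only [L1.ins, if_pos hn, if_pos (show m ≤ (X.ins n Z).leaves by omega),
          if_pos hm', if_pos hn', ihX n m h1 hn h3 hm]
      · have hm' : ¬ m - Z.leaves + 1 ≤ X.leaves := by omega
        have e1 : m - (X.leaves + Z.leaves - 1) = m - Z.leaves + 1 - X.leaves := by omega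
        simp only [L1.ins, if_pos hn, if_neg (show ¬ m ≤ (X.ins n Z).leaves by omega),
          if_neg hm', if_pos hn, hXZ, e1, if_neg hm]
    · have hm1 : ¬ m ≤ X.leaves := by omega
      have hm2 : ¬ m - Z.leaves + 1 ≤ X.leaves := by omega
      have e2 : m - X.leaves - Z.leaves + 1 = m - Z.leaves + 1 - X.leaves := by omega
      simp only [L1.ins, if_neg hn, if_neg hm1, if_neg hm2,
        ihY (n - X.leaves) (m - X.leaves) (by omega) (by omega) (by omega) (by omega), e2]

theorem L1.ins_box (X : L1) (n : ℕ) (h1 : 1 ≤ n) (h2 : n ≤ X.leaves) :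
    X.ins n L1.box = X := by
  induction X generalizing n with
  | box => rfl
  | wedge X Y ihX ihY =>
    simp only [L1.leaves] at h2
    by_cases hn : n ≤ X.leaves
    · simp only [L1.ins, if_pos hn, ihX n h1 hn]
    · simp only [L1.ins, if_neg hn, ihY (n - X.leaves) (by omega) (by omega)]

/-- Provably equal terms have the same value in `L₁`. -/
theorem Ip.val_eq {A B : Tp} (h : Ip A B) : A.val = B.val := by
  induction h with
  | refl A h => rfl
  | symm h ih => exact ih.symm
  | trans h1 h2 ih1 ih2 => exact ih1.trans ih2
  | congr h1 h2 hw1 hw2 ih1 ih2 => simp only [Tp.val, ih1, ih2]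
  | @assoc1 A B C n m hw hnm hm =>
    obtain ⟨⟨hA, hB, h1, h2⟩, hC, h3, h4⟩ := hw
    simp only [Tp.val]
    exact L1.ins_assoc1 A.val B.val C.val n m h1
      (by rw [Tp.val_size A hA]; exact h2) hnm
      (by rw [Tp.val_size B hB]; exact hm)
  | @assoc2 A B C n m hw hm =>
    obtain ⟨⟨hA, hB, h1, h2⟩, hC, h3, h4⟩ := hw
    simp only [Tp.size] at h4
    simp only [Tp.val]
    rw [L1.ins_assoc2 A.val B.val C.val n m h1
      (by rw [Tp.val_size A hA]; exact h2)
      (by rw [Tp.val_size B hB]; exact hm)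
      (by rw [Tp.val_size A hA, Tp.val_size B hB]; exact h4),
      Tp.val_size B hB]
  | unit1 h => rfl
  | @unit2 A n h h1 h2 =>
    simp only [Tp.val]
    exact L1.ins_box A.val n h1 (by rw [Tp.val_size A h]; exact h2)

/-- The canonical representative term of a tree. -/
def reprT : L1 → Tp
  | L1.box => Tp.one
  | L1.wedge X Y => (Tp.two.ins 2 (reprT Y)).ins 1 (reprT X)

theorem reprT_size (X : L1) : (reprT X).size = X.leaves := by
  induction X with
  | box => rfl
  | wedge X Y ihX ihY =>
    have := X.leaves_pos_s12; have := Y.leaves_pos_s12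
    simp only [reprT, Tp.size, ihX, ihY, L1.leaves]; omega

theorem reprT_wf (X : L1) : (reprT X).WF := by
  induction X with
  | box => trivial
  | wedge X Y ihX ihY =>
    have := Y.leaves_pos_s12
    refine ⟨⟨trivial, ihY, one_le_two, le_refl 2⟩, ihX, le_refl 1, ?_⟩
    simp only [Tp.size, reprT_size]; omega

theorem reprT_val (X : L1) : (reprT X).val = X := by
  induction X with
  | box => rfl
  | wedge X Y ihX ihY =>
    simp only [reprT, Tp.val, ihX, ihY]
    have h2 : ¬ (2 : ℕ) ≤ (L1.box : L1).leaves := by simp [L1.leaves]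
    simp only [Tp.val, L1.ins, if_neg h2, L1.leaves]
    norm_num [L1.ins]
    intro h; exact absurd h (by decide)

theorem ip_ins_repr (X : L1) : ∀ (n : ℕ) (Y : L1), 1 ≤ n → n ≤ X.leaves →
    Ip ((reprT X).ins n (reprT Y)) (reprT (X.ins n Y)) := by
  induction X with
  | box =>
    intro n Y h1 h2
    have hn : n = 1 := by simp only [L1.leaves] at h2; omega
    subst hn
    exact Ip.unit1 (reprT_wf Y)
  | wedge X₁ X₂ ih1 ih2 =>
    intro n Y h1 h2
    simp only [L1.leaves] at h2
    have hY := Y.leaves_pos_s12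
    have h1p := X₁.leaves_pos_s12
    have h2p := X₂.leaves_pos_s12
    set P₁ := reprT X₁ with hP₁
    set P₂ := reprT X₂ with hP₂
    set Q := reprT Y with hQ
    have sP₁ : P₁.size = X₁.leaves := reprT_size X₁
    have sP₂ : P₂.size = X₂.leaves := reprT_size X₂
    have sQ : Q.size = Y.leaves := reprT_size Y
    have wP₁ : P₁.WF := reprT_wf X₁
    have wP₂ : P₂.WF := reprT_wf X₂
    have wQ : Q.WF := reprT_wf Y
    have w2P₂ : (Tp.two.ins 2 P₂).WF := ⟨trivial, wP₂, one_le_two, le_refl 2⟩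
    have s2P₂ : (Tp.two.ins 2 P₂).size = X₂.leaves + 1 := by
      simp only [Tp.size, sP₂]; omega
    have wL : ((Tp.two.ins 2 P₂).ins 1 P₁).WF :=
      ⟨w2P₂, wP₁, le_refl 1, by omega⟩
    have sL : ((Tp.two.ins 2 P₂).ins 1 P₁).size = X₁.leaves + X₂.leaves := by
      simp only [Tp.size, sP₁, s2P₂]; omega
    by_cases hn : n ≤ X₁.leaves
    · -- insert into the left subtree
      have step1 : Ip ((((Tp.two.ins 2 P₂).ins 1 P₁)).ins n Q)
          ((Tp.two.ins 2 P₂).ins 1 (P₁.ins (n - 1 + 1) Q)) :=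
        Ip.assoc1 ⟨wL, wQ, h1, by omega⟩ h1 (by omega)
      have hn1 : n - 1 + 1 = n := by omega
      rw [hn1] at step1
      have hih : Ip (P₁.ins n Q) (reprT (X₁.ins n Y)) := ih1 n Y h1 hn
      have wIns : (P₁.ins n Q).WF := ⟨wP₁, wQ, h1, by omega⟩
      have sIns : (P₁.ins n Q).size = X₁.leaves + Y.leaves - 1 := by
        simp only [Tp.size, sP₁, sQ]
      have wR : (reprT (X₁.ins n Y)).WF := reprT_wf _
      have sR : (reprT (X₁.ins n Y)).size = X₁.leaves + Y.leaves - 1 := by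
        rw [reprT_size, L1.leaves_ins_s12 _ _ _ hn]
      have step2 : Ip ((Tp.two.ins 2 P₂).ins 1 (P₁.ins n Q))
          ((Tp.two.ins 2 P₂).ins 1 (reprT (X₁.ins n Y))) :=
        Ip.congr (Ip.refl _ w2P₂) hih
          ⟨w2P₂, wIns, le_refl 1, by omega⟩ ⟨w2P₂, wR, le_refl 1, by omega⟩
      have : (L1.wedge X₁ X₂).ins n Y = L1.wedge (X₁.ins n Y) X₂ := by
        simp only [L1.ins, if_pos hn]
      rw [show reprT (L1.wedge X₁ X₂) = (Tp.two.ins 2 P₂).ins 1 P₁ from rfl, this]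
      exact step1.trans step2
    · -- insert into the right subtree
      have hn' : X₁.leaves < n := by omega
      have step1 : Ip ((((Tp.two.ins 2 P₂).ins 1 P₁)).ins n Q)
          (((Tp.two.ins 2 P₂).ins (n - P₁.size + 1) Q).ins 1 P₁) :=
        Ip.assoc2 ⟨wL, wQ, h1, by omega⟩ (by omega)
      rw [sP₁] at step1
      set m := n - X₁.leaves + 1 with hm
      have step2 : Ip ((Tp.two.ins 2 P₂).ins m Q)
          (Tp.two.ins 2 (P₂.ins (m - 2 + 1) Q)) :=
        Ip.assoc1 ⟨w2P₂, wQ, by omega, by omega⟩ (by omega) (by omega)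
      have hm2 : m - 2 + 1 = n - X₁.leaves := by omega
      rw [hm2] at step2
      have hih : Ip (P₂.ins (n - X₁.leaves) Q) (reprT (X₂.ins (n - X₁.leaves) Y)) :=
        ih2 (n - X₁.leaves) Y (by omega) (by omega)
      have wIns : (P₂.ins (n - X₁.leaves) Q).WF := ⟨wP₂, wQ, by omega, by omega⟩
      have wR : (reprT (X₂.ins (n - X₁.leaves) Y)).WF := reprT_wf _
      have sIns : (P₂.ins (n - X₁.leaves) Q).size = X₂.leaves + Y.leaves - 1 := by
        simp only [Tp.size, sP₂, sQ]
      have sR : (reprT (X₂.ins (n - X₁.leaves) Y)).size = X₂.leaves + Y.leaves - 1 := by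
        rw [reprT_size, L1.leaves_ins_s12 _ _ _ (by omega)]
      have step3 : Ip (Tp.two.ins 2 (P₂.ins (n - X₁.leaves) Q))
          (Tp.two.ins 2 (reprT (X₂.ins (n - X₁.leaves) Y))) :=
        Ip.congr (Ip.refl _ trivial) hih
          ⟨trivial, wIns, one_le_two, le_refl 2⟩ ⟨trivial, wR, one_le_two, le_refl 2⟩
      have w23 : (Tp.two.ins 2 (P₂.ins (n - X₁.leaves) Q)).WF :=
        ⟨trivial, wIns, one_le_two, le_refl 2⟩
      have w23' : (Tp.two.ins 2 (reprT (X₂.ins (n - X₁.leaves) Y))).WF :=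
        ⟨trivial, wR, one_le_two, le_refl 2⟩
      have s23 : (Tp.two.ins 2 (P₂.ins (n - X₁.leaves) Q)).size
          = X₂.leaves + Y.leaves := by simp only [Tp.size, sIns]; omega
      have s23' : (Tp.two.ins 2 (reprT (X₂.ins (n - X₁.leaves) Y))).size
          = X₂.leaves + Y.leaves := by simp only [Tp.size, sR]; omega
      have lift2 : Ip (((Tp.two.ins 2 P₂).ins m Q).ins 1 P₁)
          ((Tp.two.ins 2 (P₂.ins (n - X₁.leaves) Q)).ins 1 P₁) := by
        refine Ip.congr step2 (Ip.refl _ wP₁) ?_ ?_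
        · refine ⟨⟨w2P₂, wQ, by omega, by omega⟩, wP₁, le_refl 1, ?_⟩
          simp only [Tp.size, s2P₂, sQ]; omega
        · exact ⟨w23, wP₁, le_refl 1, by omega⟩
      have lift3 : Ip ((Tp.two.ins 2 (P₂.ins (n - X₁.leaves) Q)).ins 1 P₁)
          ((Tp.two.ins 2 (reprT (X₂.ins (n - X₁.leaves) Y))).ins 1 P₁) :=
        Ip.congr step3 (Ip.refl _ wP₁)
          ⟨w23, wP₁, le_refl 1, by omega⟩ ⟨w23', wP₁, le_refl 1, by omega⟩
      have : (L1.wedge X₁ X₂).ins n Y = L1.wedge X₁ (X₂.ins (n - X₁.leaves) Y) := by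
        simp only [L1.ins, if_neg hn]
      rw [show reprT (L1.wedge X₁ X₂) = (Tp.two.ins 2 P₂).ins 1 P₁ from rfl, this]
      exact step1.trans (lift2.trans lift3)

theorem ip_repr (A : Tp) (h : A.WF) : Ip A (reprT A.val) := by
  induction A with
  | one => exact Ip.refl _ trivial
  | two =>
    have w1 : (Tp.two.ins 2 Tp.one).WF := ⟨trivial, trivial, one_le_two, le_refl 2⟩
    have e1 : Ip (Tp.two.ins 2 Tp.one) Tp.two := Ip.unit2 trivial one_le_two (le_refl 2)
    have e2 : Ip ((Tp.two.ins 2 Tp.one).ins 1 Tp.one) (Tp.two.ins 2 Tp.one) :=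
      Ip.unit2 w1 (le_refl 1) (by simp only [Tp.size]; omega)
    exact (e2.trans e1).symm
  | ins A n B ihA ihB =>
    obtain ⟨hA, hB, h1, h2⟩ := h
    have sA : (reprT A.val).size = A.size := by rw [reprT_size, Tp.val_size A hA]
    have step1 : Ip (A.ins n B) ((reprT A.val).ins n (reprT B.val)) :=
      Ip.congr (ihA hA) (ihB hB) ⟨hA, hB, h1, h2⟩
        ⟨reprT_wf _, reprT_wf _, h1, by omega⟩
    have step2 : Ip ((reprT A.val).ins n (reprT B.val)) (reprT (A.val.ins n B.val)) :=
      ip_ins_repr A.val n B.val h1 (by rw [Tp.val_size A hA]; exact h2)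
    exact step1.trans (step2.trans (Ip.refl _ (reprT_wf _)))

theorem Irel_equiv : Equivalence Irel :=
  ⟨fun A => Ip.refl A.1 A.2, Ip.symm, Ip.trans⟩

theorem quot_exact {A B : TpW} (h : Quot.mk Irel A = Quot.mk Irel B) : Irel A B :=
  (Irel_equiv.eqvGen_iff).mp (Quot.eq.mp h)

/-- The map induced by `v` on the quotient of `L'` by provable equality in `I'`
is well defined and a bijection onto `L₁`; its inverse `i` satisfies `i(□) = [1]`
and `i(X∧Y) = [(2 ◁₂ B) ◁₁ A]` whenever `i(X) = [A]` and `i(Y) = [B]`. -/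
theorem quotient_bijection :
    ∃ (vbar : Quot Irel → L1) (i : L1 → Quot Irel),
      (∀ A : TpW, vbar (Quot.mk Irel A) = A.1.val) ∧
      Function.Bijective vbar ∧
      Function.LeftInverse i vbar ∧ Function.RightInverse i vbar ∧
      i L1.box = Quot.mk Irel ⟨Tp.one, trivial⟩ ∧
      (∀ (X Y : L1) (A B : TpW), i X = Quot.mk Irel A → i Y = Quot.mk Irel B →
        i (X.wedge Y) = Quot.mk Irel ⟨(Tp.two.ins 2 B.1).ins 1 A.1, wedge_wf A B⟩) := by
  refine ⟨Quot.lift (fun A : TpW => A.1.val) (fun A B h => Ip.val_eq h),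
    fun X => Quot.mk Irel ⟨reprT X, reprT_wf X⟩, fun A => rfl, ?_, ?_, ?_, rfl, ?_⟩
  · constructor
    · intro q₁ q₂ h
      induction q₁ using Quot.ind with | _ A =>
      induction q₂ using Quot.ind with | _ B =>
      simp only [Quot.lift_mk] at h
      apply Quot.sound
      show Ip A.1 B.1
      exact (ip_repr A.1 A.2).trans (h ▸ (ip_repr B.1 B.2).symm)
    · intro X
      exact ⟨Quot.mk Irel ⟨reprT X, reprT_wf X⟩, reprT_val X⟩
  · intro q
    induction q using Quot.ind with | _ A =>
    exact Quot.sound ((ip_repr A.1 A.2).symm)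
  · intro X
    exact reprT_val X
  · intro X Y A B hX hY
    have hXA : Ip (reprT X) A.1 := quot_exact hX
    have hYB : Ip (reprT Y) B.1 := quot_exact hY
    apply Quot.sound
    show Ip ((Tp.two.ins 2 (reprT Y)).ins 1 (reprT X)) ((Tp.two.ins 2 B.1).ins 1 A.1)
    exact Ip.congr
      (Ip.congr (Ip.refl _ trivial) hYB ⟨trivial, reprT_wf Y, one_le_two, le_refl 2⟩
        ⟨trivial, B.2, one_le_two, le_refl 2⟩)
      hXA (wedge_wf ⟨reprT X, reprT_wf X⟩ ⟨reprT Y, reprT_wf Y⟩) (wedge_wf A B)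
end
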